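/- arXiv:2208.09101 — 4 statements merged into one kernel-verified Lean document; each statement's English description precedes it below -/
import Mathlib

section
/- Let {U_1, …, U_k} be an independent set of stabilizers on N qubits (so necessarily k ≤ N), and let λ_1, …, λ_k ∈ {1, −1}. Then the simultaneous eigenspace {ψ : U_i ψ = λ_i ψ for all i = 1, …, k} has complex dimension 2^{N−k}. -/
noncomputable section

/-- The space of operators (matrices) on the `N`-qubit Hilbert space. -/
abbrev QMat (N : ℕ) := Matrix (Fin N → Fin 2) (Fin N → Fin 2) ℂ

def pauliSx : Matrix (Fin 2) (Fin 2) ℂ := !![0, 1; 1, 0]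
def pauliSy : Matrix (Fin 2) (Fin 2) ℂ := !![0, -Complex.I; Complex.I, 0]
def pauliSz : Matrix (Fin 2) (Fin 2) ℂ := !![1, 0; 0, -1]

/-- A Pauli operator on `N` qubits: a ±1-signed tensor product of single-qubit
Pauli matrices `1, σx, σy, σz`. -/
def IsPauli {N : ℕ} (M : QMat N) : Prop :=
  ∃ (ε : ℂ) (P : Fin N → Matrix (Fin 2) (Fin 2) ℂ),
    (ε = 1 ∨ ε = -1) ∧
    (∀ j, P j = 1 ∨ P j = pauliSx ∨ P j = pauliSy ∨ P j = pauliSz) ∧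
    ∀ s t, M s t = ε * ∏ j, P j (s j) (t j)

/-- A set of stabilizers: pairwise commuting Pauli operators whose generated
multiplicative group (equivalently, monoid, since each element is an involution)
does not contain `-1`. -/
def IsStabilizerSet {N : ℕ} (S : Set (QMat N)) : Prop :=
  (∀ M ∈ S, IsPauli M) ∧
  (∀ M ∈ S, ∀ M' ∈ S, M * M' = M' * M) ∧
  (-1 : QMat N) ∉ Submonoid.closure S

/-- An independent set of stabilizers: the product of every nonempty finite subset
(encoded as a nodup list of elements of `S`) is not a complex scalar multiple of
the identity matrix. -/
def IsIndependentSet {N : ℕ} (S : Set (QMat N)) : Prop :=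
  IsStabilizerSet S ∧
  ∀ L : List (QMat N), L ≠ [] → L.Nodup → (∀ A ∈ L, A ∈ S) →
    ∀ c : ℂ, L.prod ≠ c • (1 : QMat N)

/-!
For an involution `U` and `λ = ±1`, the map `E = (1 + λ U) / 2` is an idempotent whose
range is the `λ`-eigenspace of `U`. The product `P = ∏ᵢ Eᵢ` of these commuting idempotents is
again idempotent, and its range is the simultaneous eigenspace, so that eigenspace has dimension
`tr P`. Expanding `P = 2⁻ᵏ ∑_{T ⊆ {1,…,k}} ∏_{i ∈ T} λᵢ Uᵢ`, every term with `T ≠ ∅` is a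
scalar multiple of a Pauli string that, by independence, is not a multiple of the identity, hence
is traceless. Only `T = ∅` contributes, so `tr P = 2ᴺ / 2ᵏ`.
-/

namespace Matrix

variable {ι n R : Type*} [Fintype ι] [CommSemiring R]

def piKronecker (P : ι → Matrix n n R) : Matrix (ι → n) (ι → n) R :=
  of fun s t => ∏ j, P j (s j) (t j)

theorem piKronecker_one [DecidableEq n] : piKronecker (fun _ : ι => (1 : Matrix n n R)) = 1 := by
  ext s t
  by_cases h : s = t
  · subst h
    simp [piKronecker]
  · obtain ⟨j, hj⟩ := Function.ne_iff.mp h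
    simp [piKronecker, one_apply, h, Finset.prod_eq_zero (Finset.mem_univ j), hj]

theorem piKronecker_mul [DecidableEq ι] [Fintype n] (P Q : ι → Matrix n n R) :
    piKronecker P * piKronecker Q = piKronecker (P * Q) := by
  ext s t
  simp only [piKronecker, mul_apply, of_apply, Pi.mul_apply, Finset.prod_univ_sum,
    Fintype.piFinset_univ, Finset.prod_mul_distrib]

theorem trace_piKronecker [DecidableEq ι] [Fintype n] (P : ι → Matrix n n R) :
    (piKronecker P).trace = ∏ j, (P j).trace := by
  simp only [trace, diag, piKronecker, of_apply, Finset.prod_univ_sum, Fintype.piFinset_univ]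

theorem trace_list_prod_mulVecLin {R : Type*} [Fintype n] [DecidableEq n] [CommRing R]
    (L : List (Matrix n n R)) :
    LinearMap.trace R (n → R) (L.map mulVecLin).prod = L.prod.trace := by
  change LinearMap.trace R _ (L.map toLinAlgEquiv').prod = _
  rw [← map_list_prod]
  exact trace_toLin'_eq _

end Matrix

section Pauli

def IsPauliMatrix (P : Matrix (Fin 2) (Fin 2) ℂ) : Prop :=
  P = 1 ∨ P = pauliSx ∨ P = pauliSy ∨ P = pauliSz

theorem IsPauliMatrix.mul_self {P : Matrix (Fin 2) (Fin 2) ℂ} (hP : IsPauliMatrix P) :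
    P * P = 1 := by
  rcases hP with rfl | rfl | rfl | rfl <;> ext i j <;> fin_cases i <;> fin_cases j <;>
    simp [pauliSx, pauliSy, pauliSz, Matrix.mul_apply]

theorem IsPauliMatrix.trace_eq_zero {P : Matrix (Fin 2) (Fin 2) ℂ} (hP : IsPauliMatrix P)
    (h1 : P ≠ 1) : P.trace = 0 := by
  rcases hP with rfl | rfl | rfl | rfl
  · exact absurd rfl h1
  all_goals simp [pauliSx, pauliSy, pauliSz, Matrix.trace_fin_two]

theorem pauliSx_mul_pauliSy : pauliSx * pauliSy = Complex.I • pauliSz := by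
  ext i j; fin_cases i <;> fin_cases j <;> simp [pauliSx, pauliSy, pauliSz, Matrix.mul_apply]

theorem pauliSy_mul_pauliSx : pauliSy * pauliSx = -Complex.I • pauliSz := by
  ext i j; fin_cases i <;> fin_cases j <;> simp [pauliSx, pauliSy, pauliSz, Matrix.mul_apply]

theorem pauliSy_mul_pauliSz : pauliSy * pauliSz = Complex.I • pauliSx := by
  ext i j; fin_cases i <;> fin_cases j <;> simp [pauliSx, pauliSy, pauliSz, Matrix.mul_apply]

theorem pauliSz_mul_pauliSy : pauliSz * pauliSy = -Complex.I • pauliSx := by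
  ext i j; fin_cases i <;> fin_cases j <;> simp [pauliSx, pauliSy, pauliSz, Matrix.mul_apply]

theorem pauliSz_mul_pauliSx : pauliSz * pauliSx = Complex.I • pauliSy := by
  ext i j; fin_cases i <;> fin_cases j <;> simp [pauliSx, pauliSy, pauliSz, Matrix.mul_apply]

theorem pauliSx_mul_pauliSz : pauliSx * pauliSz = -Complex.I • pauliSy := by
  ext i j; fin_cases i <;> fin_cases j <;> simp [pauliSx, pauliSy, pauliSz, Matrix.mul_apply]

theorem IsPauliMatrix.mul_eq_smul {P Q : Matrix (Fin 2) (Fin 2) ℂ} (hP : IsPauliMatrix P)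
    (hQ : IsPauliMatrix Q) :
    ∃ (c : ℂ) (R : Matrix (Fin 2) (Fin 2) ℂ), IsPauliMatrix R ∧ P * Q = c • R := by
  by_cases hPQ : P = Q
  · exact ⟨1, 1, Or.inl rfl, by rw [hPQ, hQ.mul_self, one_smul]⟩
  rcases hP with rfl | rfl | rfl | rfl <;> rcases hQ with rfl | rfl | rfl | rfl <;>
  first
  | exact absurd rfl hPQ
  | exact ⟨1, _, by simp [IsPauliMatrix], (one_mul _).trans (one_smul ℂ _).symm⟩
  | exact ⟨1, _, by simp [IsPauliMatrix], (mul_one _).trans (one_smul ℂ _).symm⟩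
  | exact ⟨_, _, by simp [IsPauliMatrix], pauliSx_mul_pauliSy⟩
  | exact ⟨_, _, by simp [IsPauliMatrix], pauliSy_mul_pauliSx⟩
  | exact ⟨_, _, by simp [IsPauliMatrix], pauliSy_mul_pauliSz⟩
  | exact ⟨_, _, by simp [IsPauliMatrix], pauliSz_mul_pauliSy⟩
  | exact ⟨_, _, by simp [IsPauliMatrix], pauliSz_mul_pauliSx⟩
  | exact ⟨_, _, by simp [IsPauliMatrix], pauliSx_mul_pauliSz⟩

variable {N : ℕ}

/-- Unlike `IsPauli`, the phase is an arbitrary complex number, so that the class is closed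
under multiplication. -/
def IsScaledPauli (M : QMat N) : Prop :=
  ∃ (c : ℂ) (P : Fin N → Matrix (Fin 2) (Fin 2) ℂ),
    (∀ j, IsPauliMatrix (P j)) ∧ M = c • Matrix.piKronecker P

theorem IsPauli.eq_smul_piKronecker {M : QMat N} (hM : IsPauli M) :
    ∃ (ε : ℂ) (P : Fin N → Matrix (Fin 2) (Fin 2) ℂ),
      (ε = 1 ∨ ε = -1) ∧ (∀ j, IsPauliMatrix (P j)) ∧ M = ε • Matrix.piKronecker P := by
  obtain ⟨ε, P, hε, hP, hM⟩ := hM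
  exact ⟨ε, P, hε, hP, Matrix.ext fun s t => by simp [hM, Matrix.piKronecker]⟩

theorem IsPauli.isScaledPauli {M : QMat N} (hM : IsPauli M) : IsScaledPauli M := by
  obtain ⟨ε, P, -, hP, rfl⟩ := hM.eq_smul_piKronecker
  exact ⟨ε, P, hP, rfl⟩

theorem IsPauli.mul_self {M : QMat N} (hM : IsPauli M) : M * M = 1 := by
  obtain ⟨ε, P, hε, hP, rfl⟩ := hM.eq_smul_piKronecker
  have hPP : P * P = fun _ => 1 := funext fun j => (hP j).mul_self
  have hεε : ε * ε = 1 := by rcases hε with rfl | rfl <;> norm_num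
  rw [smul_mul_smul, Matrix.piKronecker_mul, hPP, Matrix.piKronecker_one, hεε, one_smul]

theorem isScaledPauli_one : IsScaledPauli (1 : QMat N) :=
  ⟨1, fun _ => 1, fun _ => Or.inl rfl, by rw [Matrix.piKronecker_one, one_smul]⟩

theorem IsScaledPauli.mul {M M' : QMat N} (hM : IsScaledPauli M) (hM' : IsScaledPauli M') :
    IsScaledPauli (M * M') := by
  obtain ⟨c, P, hP, rfl⟩ := hM
  obtain ⟨c', P', hP', rfl⟩ := hM'
  choose d R hR hPR using fun j => (hP j).mul_eq_smul (hP' j)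
  refine ⟨c * c' * ∏ j, d j, R, hR, ?_⟩
  rw [smul_mul_smul, Matrix.piKronecker_mul, show P * P' = fun j => d j • R j from funext hPR]
  ext s t
  simp [Matrix.piKronecker, Finset.prod_mul_distrib, mul_assoc]

theorem IsScaledPauli.list_prod {L : List (QMat N)} (hL : ∀ M ∈ L, IsScaledPauli M) :
    IsScaledPauli L.prod := by
  induction L with
  | nil => exact isScaledPauli_one
  | cons M L ih =>
    rw [List.prod_cons]
    exact (hL M List.mem_cons_self).mul (ih fun M' hM' => hL M' (List.mem_cons_of_mem M hM'))

theorem IsScaledPauli.trace_eq_zero {M : QMat N} (hM : IsScaledPauli M)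
    (hscalar : ∀ c : ℂ, M ≠ c • 1) : M.trace = 0 := by
  obtain ⟨c, P, hP, rfl⟩ := hM
  have hne : ∃ j, P j ≠ 1 := by
    by_contra! h
    exact hscalar c (by rw [show P = fun _ => 1 from funext h, Matrix.piKronecker_one])
  obtain ⟨j, hj⟩ := hne
  rw [Matrix.trace_smul, Matrix.trace_piKronecker,
    Finset.prod_eq_zero (Finset.mem_univ j) ((hP j).trace_eq_zero hj), smul_zero]

theorem IsIndependentSet.trace_list_prod_eq_zero {S : Set (QMat N)} (hS : IsIndependentSet S)
    {L : List (QMat N)} (hne : L ≠ []) (hnd : L.Nodup) (hLS : ∀ M ∈ L, M ∈ S) :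
    L.prod.trace = 0 :=
  (IsScaledPauli.list_prod fun M hM => (hS.1.1 M (hLS M hM)).isScaledPauli).trace_eq_zero
    (hS.2 L hne hnd hLS)

end Pauli

section CommutingInvolutions

open Module LinearMap IsMulCommutative

variable {K A : Type*} [Field K]

theorem isIdempotentElem_half_one_add [NeZero (2 : K)] [Ring A] [Algebra K A] {a : A}
    (ha : a * a = 1) : IsIdempotentElem ((2⁻¹ : K) • (1 + a)) := by
  have hsq : (1 + a) * (1 + a) = (2 : K) • (1 + a) := by
    simp only [add_mul, mul_add, one_mul, mul_one, ha]
    module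
  rw [IsIdempotentElem, smul_mul_smul, hsq, smul_smul, mul_assoc, inv_mul_cancel₀ two_ne_zero,
    mul_one]

theorem trace_prod_half_one_add [CommRing A] [Algebra K A] (τ : A →ₗ[K] K) {ι : Type*}
    (s : Finset ι) (a : ι → A) (h : ∀ T ⊆ s, T.Nonempty → τ (∏ i ∈ T, a i) = 0) :
    τ (∏ i ∈ s, (2⁻¹ : K) • (1 + a i)) = τ 1 / 2 ^ s.card := by
  rw [← Finset.smul_prod, Finset.prod_one_add, map_smul, map_sum,
    Finset.sum_eq_single_of_mem ∅ (Finset.empty_mem_powerset s), Finset.prod_empty, smul_eq_mul,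
    inv_pow, inv_mul_eq_div]
  intro T hT hne
  exact h T (Finset.mem_powerset.mp hT) (Finset.nonempty_iff_ne_empty.mpr hne)

theorem mem_range_map_prod_iff {R M F ι : Type*} [CommMonoid A] [Semiring R] [AddCommMonoid M]
    [Module R M] [FunLike F A (Module.End R M)] [MonoidHomClass F A (Module.End R M)] (f : F)
    (s : Finset ι) {e : ι → A} (he : ∀ i ∈ s, IsIdempotentElem (e i)) {v : M} :
    v ∈ range (f (∏ i ∈ s, e i)) ↔ ∀ i ∈ s, f (e i) v = v := by
  classical
  constructor
  · rintro ⟨w, rfl⟩ i hi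
    rw [← Module.End.mul_apply, ← map_mul, ← Finset.mul_prod_erase s e hi, ← mul_assoc,
      (he i hi).eq]
  · intro hv
    refine ⟨v, Finset.prod_induction e (fun x => f x v = v) ?_ (by simp) hv⟩
    intro x y hx hy
    rw [map_mul, Module.End.mul_apply, hy, hx]

variable {V ι : Type*} [AddCommGroup V] [Module K V]

theorem mem_ker_sub_one_iff_half_one_add [NeZero (2 : K)] [Ring A] [Algebra K A]
    (f : A →ₐ[K] Module.End K V) (a : A) {v : V} :
    v ∈ ker (f a - 1) ↔ f ((2⁻¹ : K) • (1 + a)) v = v := by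
  rw [mem_ker, LinearMap.sub_apply, Module.End.one_apply, sub_eq_zero, map_smul, map_add, map_one,
    LinearMap.smul_apply, LinearMap.add_apply, Module.End.one_apply,
    inv_smul_eq_iff₀ two_ne_zero, two_smul, add_right_inj]

theorem finrank_iInf_ker_sub_one_mul_two_pow [CharZero K] [FiniteDimensional K V] [CommRing A]
    [Algebra K A] [Fintype ι] (f : A →ₐ[K] Module.End K V) (a : ι → A)
    (hsq : ∀ i, a i * a i = 1)
    (htr : ∀ T : Finset ι, T.Nonempty → trace K V (f (∏ i ∈ T, a i)) = 0) :
    finrank K ↥(⨅ i, ker (f (a i) - 1)) * 2 ^ Fintype.card ι = finrank K V := by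
  set p := ∏ i, (2⁻¹ : K) • (1 + a i) with hp_def
  have hp : IsIdempotentElem (f p) :=
    (Finset.prod_induction _ IsIdempotentElem (fun _ _ => IsIdempotentElem.mul)
      IsIdempotentElem.one fun i _ => isIdempotentElem_half_one_add (hsq i)).map f
  have hrange : ⨅ i, ker (f (a i) - 1) = range (f p) := by
    ext v
    rw [Submodule.mem_iInf, hp_def,
      mem_range_map_prod_iff f Finset.univ fun i _ => isIdempotentElem_half_one_add (hsq i)]
    simp only [mem_ker_sub_one_iff_half_one_add, Finset.mem_univ, true_implies]
  have htrace : trace K V (f p) = finrank K V / 2 ^ Fintype.card ι := by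
    have h := trace_prod_half_one_add ((trace K V).comp f.toLinearMap) Finset.univ a
      fun T _ hT => htr T hT
    simpa only [comp_apply, AlgHom.toLinearMap_apply, map_one, trace_one,
      Finset.card_univ] using h
  rw [hrange]
  rw [hp.isProj_range.trace] at htrace
  exact_mod_cast (eq_div_iff (pow_ne_zero _ two_ne_zero)).mp htrace

theorem ker_sub_smul_id_eq_ker_smul_sub_one (f : Module.End K V) {μ : K} (hμ : μ * μ = 1) :
    ker (f - μ • LinearMap.id) = ker (μ • f - 1) := by
  rw [← ker_smul _ _ (left_ne_zero_of_mul_eq_one hμ), smul_sub, smul_smul, hμ, one_smul]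
  rfl

theorem finrank_iInf_ker_sub_smul_id_mul_two_pow [CharZero K] [FiniteDimensional K V]
    [Fintype ι] (u : ι → Module.End K V) (hcomm : ∀ i j, Commute (u i) (u j))
    (hsq : ∀ i, u i * u i = 1)
    (htr : ∀ l : List ι, l ≠ [] → l.Nodup → trace K V (l.map u).prod = 0)
    (μ : ι → K) (hμ : ∀ i, μ i * μ i = 1) :
    finrank K ↥(⨅ i, ker (u i - μ i • LinearMap.id)) * 2 ^ Fintype.card ι = finrank K V := by
  classical
  -- Products over a `Finset` make sense in the commutative algebra generated by the `u i`.
  let B := Algebra.adjoin K (Set.range u)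
  have : IsMulCommutative B :=
    Algebra.isMulCommutative_adjoin K (by rintro _ ⟨i, rfl⟩ _ ⟨j, rfl⟩; exact hcomm i j)
  let b : ι → B := fun i => ⟨u i, Algebra.subset_adjoin ⟨i, rfl⟩⟩
  have hval : ∀ T : Finset ι, ((∏ i ∈ T, b i : B) : Module.End K V) = (T.toList.map u).prod := by
    intro T
    rw [← Finset.prod_map_toList, ← B.val_apply, map_list_prod, List.map_map]
    rfl
  have h := finrank_iInf_ker_sub_one_mul_two_pow B.val (fun i => μ i • b i)
    (fun i => by rw [smul_mul_smul, hμ i, one_smul]; exact Subtype.ext (hsq i))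
    (fun T hT => by
      rw [Finset.prod_smul, map_smul, map_smul, B.val_apply, hval,
        htr _ (by simpa using hT.ne_empty) T.nodup_toList, smul_zero])
  rw [iInf_congr fun i => ker_sub_smul_id_eq_ker_smul_sub_one (u i) (hμ i)]
  exact h

end CommutingInvolutions

theorem Nat.eq_pow_sub_of_mul_pow_eq {b d k n : ℕ} (hb : 1 < b) (h : d * b ^ k = b ^ n) :
    d = b ^ (n - k) := by
  have hk : k ≤ n := (Nat.pow_dvd_pow_iff_le_right hb).mp (Dvd.intro_left d h)
  rw [← Nat.pow_div hk (by omega), ← h, Nat.mul_div_cancel _ (by positivity)]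

theorem statement1_general (N k : ℕ)
    (U : Fin k → QMat N)
    (hinj : Function.Injective U)
    (hind : IsIndependentSet (Set.range U))
    (lam : Fin k → ℂ) (hlam : ∀ i, lam i = 1 ∨ lam i = -1) :
    Module.finrank ℂ
      ↥(⨅ i : Fin k,
          LinearMap.ker (Matrix.mulVecLin (U i) - lam i • LinearMap.id)) =
      2 ^ (N - k) := by
  have hmul : ∀ i j, (U i).mulVecLin * (U j).mulVecLin = (U i * U j).mulVecLin := fun i j =>
    (Matrix.mulVecLin_mul _ _).symm
  have hcomm : ∀ i j, Commute (U i).mulVecLin (U j).mulVecLin := fun i j => by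
    rw [Commute, SemiconjBy, hmul, hmul, hind.1.2.1 _ ⟨i, rfl⟩ _ ⟨j, rfl⟩]
  have hsq : ∀ i, (U i).mulVecLin * (U i).mulVecLin = 1 := fun i => by
    rw [hmul, (hind.1.1 _ ⟨i, rfl⟩).mul_self, Matrix.mulVecLin_one]
    rfl
  have htr : ∀ l : List (Fin k), l ≠ [] → l.Nodup →
      LinearMap.trace ℂ _ (l.map fun i => (U i).mulVecLin).prod = 0 := fun l hne hnd => by
    have h := Matrix.trace_list_prod_mulVecLin (l.map U)
    rw [List.map_map] at h
    exact h.trans (hind.trace_list_prod_eq_zero (by simpa using hne) (hnd.map hinj) (by simp))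
  have hlam2 : ∀ i, lam i * lam i = 1 := fun i => by rcases hlam i with h | h <;> simp [h]
  have h := finrank_iInf_ker_sub_smul_id_mul_two_pow _ hcomm hsq htr lam hlam2
  simp only [Module.finrank_fintype_fun_eq_card, Fintype.card_fun, Fintype.card_fin] at h
  exact Nat.eq_pow_sub_of_mul_pow_eq one_lt_two h

/-- the simultaneous eigenspace of an independent set of `k` stabilizers
`U i` with eigenvalues `λ i ∈ {1,-1}` has complex dimension `2^(N-k)`. -/
theorem statement1 (N k : ℕ) (hN : 0 < N)
    (U : Fin k → QMat N)
    (hinj : Function.Injective U)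
    (hind : IsIndependentSet (Set.range U))
    (lam : Fin k → ℂ) (hlam : ∀ i, lam i = 1 ∨ lam i = -1) :
    Module.finrank ℂ
      ↥(⨅ i : Fin k,
          LinearMap.ker (Matrix.mulVecLin (U i) - lam i • LinearMap.id)) =
      2 ^ (N - k) :=
  statement1_general N k U hinj hind lam hlam
end
end

section
/- Suppose S = {ε_1 X_{u_1}, …, ε_M X_{u_M}}, with ε_r ∈ {1, −1} and u_r : Fin N → ZMod 2, is an independent set of stabilizers on N qubits whose elements are all signed products of Pauli X operators. Then there exist v_1, …, v_{N−M} : Fin N → ZMod 2 such that S ∪ {Z_{v_1}, …, Z_{v_{N−M}}} is a complete independent set of stabilizers on N qubits. -/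
noncomputable section

/-- A complete independent set of stabilizers: an independent set with exactly `N` elements. -/
def IsCompleteSet {N : ℕ} (S : Set (QMat N)) : Prop :=
  IsIndependentSet S ∧ S.ncard = N

/-- The (sign `+1`) product of Pauli-`X` operators: `σx` at positions where `u j = 1`,
identity elsewhere. -/
def XopF {N : ℕ} (u : Fin N → ZMod 2) : QMat N :=
  Matrix.of fun s t => ∏ j, (if u j = 1 then pauliSx else 1) (s j) (t j)

/-- The (sign `+1`) product of Pauli-`Z` operators: `σz` at positions where `v j = 1`,
identity elsewhere. -/
def ZopF {N : ℕ} (v : Fin N → ZMod 2) : QMat N :=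
  Matrix.of fun s t => ∏ j, (if v j = 1 then pauliSz else 1) (s j) (t j)

/-!
Every operator in sight has the form `c • Z_b X_a` with `a b : 𝔽₂ᴺ`, and these multiply by adding
the vectors, at the cost of the sign `(-1)^(b' ⬝ a)`. Since a product of distinct `X`-stabilizers
is a scalar exactly when the corresponding `u`'s sum to zero, independence makes `u₁, …, u_M`
linearly independent over `𝔽₂`, so `M ≤ N` and the `u`'s have an orthogonal complement of
dimension `N - M`; take `v₁, …, v_{N-M}` a basis of it. Orthogonality makes all generators
commute and all products sign-free, so a product of distinct generators is a scalar only if the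
vectors `(u_r, 0)`, `(0, v_s)` involved sum to zero, which linear independence forbids. Finally
`-1 = x Z_b` with `x` generated by the `X`-stabilizers forces `b = 0`, hence `-1 = x`, which the
hypothesis excludes.
-/


lemma ZMod.eq_zero_or_eq_one_of_two (z : ZMod 2) : z = 0 ∨ z = 1 := by
  revert z; decide

theorem Submonoid.exists_mul_eq_of_mem_closure_union {M : Type*} [Monoid M] {s t : Set M}
    (hst : ∀ x ∈ s, ∀ y ∈ t, x * y = y * x) {m : M} (hm : m ∈ closure (s ∪ t)) :
    ∃ x ∈ closure s, ∃ y ∈ closure t, x * y = m := by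
  have hs : closure s ≤ centralizer t := closure_le.mpr fun x hx y hy => (hst x hx y hy).symm
  have ht : closure t ≤ centralizer (closure s) :=
    closure_le.mpr fun y hy x hx => (hs hx y hy).symm
  induction hm using closure_induction with
  | mem m hm =>
    rcases hm with hm | hm
    · exact ⟨m, subset_closure hm, 1, one_mem _, mul_one m⟩
    · exact ⟨1, one_mem _, m, subset_closure hm, one_mul m⟩
  | one => exact ⟨1, one_mem _, 1, one_mem _, mul_one 1⟩
  | mul m m' _ _ ih ih' =>
    obtain ⟨x, hx, y, hy, rfl⟩ := ih
    obtain ⟨x', hx', y', hy', rfl⟩ := ih'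
    refine ⟨x * x', mul_mem hx hx', y * y', mul_mem hy hy', ?_⟩
    rw [show x * y * (x' * y') = x * (y * x') * y' by simp only [mul_assoc], ← ht hy x' hx']
    simp only [mul_assoc]

theorem linearIndependent_zmod_two_iff {ι V : Type*} [AddCommGroup V] [Module (ZMod 2) V]
    {v : ι → V} : LinearIndependent (ZMod 2) v ↔ ∀ s : Finset ι, ∑ i ∈ s, v i = 0 → s = ∅ := by
  classical
  rw [linearIndependent_iff']
  constructor
  · intro h s hs
    by_contra hne
    obtain ⟨i, hi⟩ := Finset.nonempty_iff_ne_empty.mpr hne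
    exact one_ne_zero (h s 1 (by simpa using hs) i hi)
  · intro h s g hg i hi
    have hsum : ∑ j ∈ s.filter (g · = 1), v j = ∑ j ∈ s, g j • v j := by
      rw [Finset.sum_filter]
      refine Finset.sum_congr rfl fun j _ => ?_
      rcases ZMod.eq_zero_or_eq_one_of_two (g j) with h | h <;> simp [h]
    have hempty := h _ (hsum.trans hg)
    rw [Finset.filter_eq_empty_iff] at hempty
    exact (ZMod.eq_zero_or_eq_one_of_two (g i)).resolve_right (hempty hi)

theorem exists_linearIndependent_dotProduct_eq_zero {K : Type*} [Field K] {M N : ℕ}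
    (u : Fin M → Fin N → K) :
    ∃ v : Fin (N - M) → Fin N → K, LinearIndependent K v ∧ ∀ s r, v s ⬝ᵥ u r = 0 := by
  set Φ := (Matrix.of u).mulVecLin
  have hdim : N - M ≤ Module.finrank K (LinearMap.ker Φ) := by
    have h1 := LinearMap.finrank_range_add_finrank_ker Φ
    have h2 := Submodule.finrank_le (LinearMap.range Φ)
    simp only [Module.finrank_fin_fun] at h1 h2
    omega
  let B := Module.finBasis K (LinearMap.ker Φ)
  refine ⟨fun s => B (Fin.castLE hdim s), ?_, fun s r => ?_⟩
  · exact (B.linearIndependent.comp _ (Fin.castLE_injective hdim)).map' (LinearMap.ker Φ).subtype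
      (LinearMap.ker Φ).ker_subtype
  · have h := congrFun (LinearMap.mem_ker.mp (B (Fin.castLE hdim s)).2) r
    rw [dotProduct_comm]
    exact h

namespace Stabilizer

def sgn : AddChar (ZMod 2) ℂ where
  toFun z := (-1) ^ z.val
  map_zero_eq_one' := by simp
  map_add_eq_mul' x y := by rw [ZMod.val_add, ← neg_one_pow_eq_pow_mod_two, pow_add]

lemma sgn_one : sgn 1 = -1 := by
  change (-1 : ℂ) ^ (1 : ZMod 2).val = -1
  rw [ZMod.val_one, pow_one]

lemma sgn_injective : Function.Injective sgn := by
  intro x y h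
  rcases ZMod.eq_zero_or_eq_one_of_two x with rfl | rfl <;>
    rcases ZMod.eq_zero_or_eq_one_of_two y with rfl | rfl <;> norm_num [sgn_one] at h <;> rfl

lemma sgn_sum {α : Type*} (s : Finset α) (f : α → ZMod 2) :
    sgn (∑ j ∈ s, f j) = ∏ j ∈ s, sgn (f j) := by
  classical
  induction s using Finset.induction_on with
  | empty => simp
  | insert j s hj ih => rw [Finset.sum_insert hj, Finset.prod_insert hj, AddChar.map_add_eq_mul, ih]

variable {N : ℕ}

/-- `ZMod 2` is definitionally `Fin 2`; `bits` reads a basis index as a vector over `ZMod 2`. -/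
def bits : (Fin N → Fin 2) ≃ (Fin N → ZMod 2) := Equiv.refl _

/-- The operator `c • Z_b X_a`. -/
def pauliOp (c : ℂ) (a b : Fin N → ZMod 2) : QMat N :=
  Matrix.of fun s t => if bits t = bits s + a then c * sgn (b ⬝ᵥ bits s) else 0

lemma pauliOp_apply (c : ℂ) (a b : Fin N → ZMod 2) (s t : Fin N → Fin 2) :
    pauliOp c a b s t = if bits t = bits s + a then c * sgn (b ⬝ᵥ bits s) else 0 := rfl

lemma smul_pauliOp (d c : ℂ) (a b : Fin N → ZMod 2) :
    d • pauliOp c a b = pauliOp (d * c) a b := by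
  ext s t
  simp [pauliOp_apply, mul_assoc]

lemma pauliOp_zero_zero (c : ℂ) : pauliOp (N := N) c 0 0 = c • 1 := by
  ext s t
  simp [pauliOp_apply, Matrix.one_apply, eq_comm]

lemma pauliOp_mul (c d : ℂ) (a b a' b' : Fin N → ZMod 2) :
    pauliOp c a b * pauliOp d a' b' = pauliOp (c * d * sgn (b' ⬝ᵥ a)) (a + a') (b + b') := by
  ext s t
  rw [Matrix.mul_apply, Fintype.sum_eq_single (bits.symm (bits s + a))]
  · simp only [pauliOp_apply, Equiv.apply_symm_apply, add_assoc, if_true, dotProduct_add,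
      add_dotProduct, AddChar.map_add_eq_mul]
    split_ifs <;> ring
  · intro k hk
    have : bits k ≠ bits s + a := fun h => hk (by rw [← h, Equiv.symm_apply_apply])
    simp [pauliOp_apply, this]

lemma pauliOp_mul_comm {c d : ℂ} {a b a' b' : Fin N → ZMod 2} (h : b' ⬝ᵥ a = b ⬝ᵥ a') :
    pauliOp c a b * pauliOp d a' b' = pauliOp d a' b' * pauliOp c a b := by
  rw [pauliOp_mul, pauliOp_mul, h, mul_comm c d, add_comm a, add_comm b]

lemma eq_of_pauliOp_eq {c d : ℂ} {a b a' b' : Fin N → ZMod 2} (hc : c ≠ 0)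
    (h : pauliOp c a b = pauliOp d a' b') : c = d ∧ a = a' ∧ b = b' := by
  have hentry : ∀ x, pauliOp c a b (bits.symm x) (bits.symm (x + a))
      = pauliOp d a' b' (bits.symm x) (bits.symm (x + a)) := fun x => by rw [h]
  simp only [pauliOp_apply, Equiv.apply_symm_apply, if_true, add_right_inj] at hentry
  have ha : a = a' := by
    by_contra ha
    simpa [ha, hc] using hentry 0
  subst ha
  have hcd : c = d := by simpa using hentry 0
  subst hcd
  refine ⟨rfl, rfl, funext fun j => ?_⟩
  have hj := hentry (Pi.single j 1)
  rw [if_pos rfl, dotProduct_single_one, dotProduct_single_one] at hj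
  exact sgn_injective (mul_left_cancel₀ hc hj)

lemma XopF_eq_pauliOp (u : Fin N → ZMod 2) : XopF u = pauliOp 1 u 0 := by
  have hfactor : ∀ (w : ZMod 2) (x y : Fin 2), (if w = 1 then pauliSx else 1) x y
      = if y = x + (show Fin 2 from w) then 1 else 0 := by
    intro w x y
    rcases ZMod.eq_zero_or_eq_one_of_two w with rfl | rfl <;>
      rcases ZMod.eq_zero_or_eq_one_of_two x with rfl | rfl <;>
      rcases ZMod.eq_zero_or_eq_one_of_two y with rfl | rfl <;> rfl
  ext s t
  simp only [XopF, Matrix.of_apply, hfactor, pauliOp_apply, zero_dotProduct,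
    AddChar.map_zero_eq_one, mul_one]
  rw [Fintype.prod_boole]
  congr 1
  simp only [funext_iff]
  rfl

lemma ZopF_eq_pauliOp (v : Fin N → ZMod 2) : ZopF v = pauliOp 1 0 v := by
  have hfactor : ∀ (w : ZMod 2) (x y : Fin 2), (if w = 1 then pauliSz else 1) x y
      = if y = x then sgn (w * show ZMod 2 from x) else 0 := by
    intro w x y
    rcases ZMod.eq_zero_or_eq_one_of_two w with rfl | rfl <;>
      rcases ZMod.eq_zero_or_eq_one_of_two x with rfl | rfl <;>
      rcases ZMod.eq_zero_or_eq_one_of_two y with rfl | rfl <;> simp [pauliSz, sgn_one] <;> rfl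
  ext s t
  simp only [ZopF, Matrix.of_apply, hfactor, pauliOp_apply, add_zero, one_mul, dotProduct,
    sgn_sum]
  rw [Fintype.prod_ite_zero]
  congr 1
  simp only [funext_iff]
  rfl

lemma isPauli_ZopF (v : Fin N → ZMod 2) : IsPauli (ZopF v) :=
  ⟨1, fun j => if v j = 1 then pauliSz else 1, Or.inl rfl,
    fun j => by by_cases h : v j = 1 <;> simp [h], fun s t => (one_mul _).symm⟩

lemma list_prod_pauliOp {ι : Type*} (c : ι → ℂ) (a b : ι → Fin N → ZMod 2)
    (hba : ∀ i j, b i ⬝ᵥ a j = 0) (l : List ι) :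
    (l.map fun i => pauliOp (c i) (a i) (b i)).prod
      = pauliOp (l.map c).prod (l.map a).sum (l.map b).sum := by
  induction l with
  | nil => simp [pauliOp_zero_zero]
  | cons i l ih =>
    have hsign : ∀ l' : List ι, (l'.map b).sum ⬝ᵥ a i = 0 := fun l' => by
      induction l' <;> simp [add_dotProduct, *]
    rw [List.map_cons, List.prod_cons, ih, pauliOp_mul, hsign]
    simp

def NoScalarProducts (S : Set (QMat N)) : Prop :=
  ∀ L : List (QMat N), L ≠ [] → L.Nodup → (∀ A ∈ L, A ∈ S) →
    ∀ c : ℂ, L.prod ≠ c • (1 : QMat N)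

section Family

variable {ι : Type*} {c : ι → ℂ} {a b : ι → Fin N → ZMod 2}

lemma exists_eq_pauliOp_of_mem_closure (hba : ∀ i j, b i ⬝ᵥ a j = 0) {x : QMat N}
    (hx : x ∈ Submonoid.closure (Set.range fun i => pauliOp (c i) (a i) (b i))) :
    ∃ l : List ι, x = pauliOp (l.map c).prod (l.map a).sum (l.map b).sum := by
  obtain ⟨L, hL, rfl⟩ := Submonoid.exists_list_of_mem_closure hx
  obtain ⟨l, rfl⟩ : L ∈ Set.range (List.map fun i => pauliOp (c i) (a i) (b i)) := by
    rw [Set.range_list_map]; exact hL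
  exact ⟨l, list_prod_pauliOp c a b hba l⟩

theorem noScalarProducts_range_pauliOp_iff (hc : ∀ i, c i ≠ 0) (hba : ∀ i j, b i ⬝ᵥ a j = 0)
    (hinj : Function.Injective fun i => pauliOp (c i) (a i) (b i)) :
    NoScalarProducts (Set.range fun i => pauliOp (c i) (a i) (b i)) ↔
      LinearIndependent (ZMod 2) fun i => (a i, b i) := by
  classical
  have hsum : ∀ s : Finset ι, ∑ i ∈ s, (a i, b i) = (∑ i ∈ s, a i, ∑ i ∈ s, b i) := fun s =>
    Prod.ext (Prod.fst_sum ..) (Prod.snd_sum ..)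
  rw [linearIndependent_zmod_two_iff]
  constructor
  · intro h s hs
    by_contra hne
    refine h (s.toList.map _) (by simpa using hne) (s.nodup_toList.map hinj) (by simp)
      (∏ i ∈ s, c i) ?_
    rw [hsum, Prod.mk_eq_zero] at hs
    rw [list_prod_pauliOp c a b hba, Finset.prod_map_toList, Finset.sum_map_toList,
      Finset.sum_map_toList, hs.1, hs.2, pauliOp_zero_zero]
  · intro h L hne hnd hL c' hprod
    obtain ⟨l, rfl⟩ : L ∈ Set.range (List.map fun i => pauliOp (c i) (a i) (b i)) := by
      rw [Set.range_list_map]; exact hL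
    have hl := hnd.of_map
    rw [list_prod_pauliOp c a b hba, ← pauliOp_zero_zero] at hprod
    obtain ⟨-, ha, hb⟩ := eq_of_pauliOp_eq (by simp [List.prod_eq_zero_iff, hc]) hprod
    have hzero := h l.toFinset
      (by rw [hsum, List.sum_toFinset _ hl, List.sum_toFinset _ hl, ha, hb]; rfl)
    exact hne (by simp [(List.toFinset_eq_empty_iff l).mp hzero])

end Family

lemma neg_one_notMem_closure_union {ι κ : Type*} {c : ι → ℂ} {a : ι → Fin N → ZMod 2}
    {b : κ → Fin N → ZMod 2} (hba : ∀ k i, b k ⬝ᵥ a i = 0)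
    (h : (-1 : QMat N) ∉ Submonoid.closure (Set.range fun i => pauliOp (c i) (a i) 0)) :
    (-1 : QMat N) ∉ Submonoid.closure
      ((Set.range fun i => pauliOp (c i) (a i) 0) ∪ Set.range fun k => pauliOp 1 0 (b k)) := by
  intro hmem
  obtain ⟨x, hx, z, hz, hxz⟩ := Submonoid.exists_mul_eq_of_mem_closure_union
    (by rintro _ ⟨i, rfl⟩ _ ⟨k, rfl⟩; exact pauliOp_mul_comm (by simp [hba])) hmem
  obtain ⟨l, rfl⟩ := exists_eq_pauliOp_of_mem_closure (b := fun _ => 0)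
    (fun _ _ => zero_dotProduct _) hx
  obtain ⟨m, rfl⟩ := exists_eq_pauliOp_of_mem_closure (c := fun _ => 1) (a := fun _ => 0)
    (fun _ _ => dotProduct_zero _) hz
  rw [pauliOp_mul, ← neg_one_smul ℂ (1 : QMat N), ← pauliOp_zero_zero] at hxz
  obtain ⟨hc, ha, -⟩ := eq_of_pauliOp_eq (neg_ne_zero.mpr one_ne_zero) hxz.symm
  simp only [List.map_const', List.sum_replicate, smul_zero, add_zero, List.prod_replicate,
    one_pow, mul_one] at ha hc hx
  rw [← ha, dotProduct_zero, AddChar.map_zero_eq_one, mul_one] at hc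
  rw [← hc, ← ha, pauliOp_zero_zero, neg_one_smul] at hx
  exact h hx

theorem isCompleteSet_union_range_pauliOp {M K : ℕ} {ε : Fin M → ℂ} {u : Fin M → Fin N → ZMod 2}
    {v : Fin K → Fin N → ZMod 2} (hMK : M + K = N) (hε : ∀ r, ε r ≠ 0)
    (hu : LinearIndependent (ZMod 2) u) (hv : LinearIndependent (ZMod 2) v)
    (hvu : ∀ s r, v s ⬝ᵥ u r = 0)
    (hX : IsStabilizerSet (Set.range fun r => pauliOp (ε r) (u r) 0)) :
    IsCompleteSet
      ((Set.range fun r => pauliOp (ε r) (u r) 0) ∪ Set.range fun s => pauliOp 1 0 (v s)) := by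
  obtain ⟨hpauli, -, hneg⟩ := hX
  set c : Fin M ⊕ Fin K → ℂ := Sum.elim ε 1
  set a : Fin M ⊕ Fin K → Fin N → ZMod 2 := Sum.elim u 0
  set b : Fin M ⊕ Fin K → Fin N → ZMod 2 := Sum.elim 0 v
  have hrange : ((Set.range fun r => pauliOp (ε r) (u r) 0) ∪ Set.range fun s => pauliOp 1 0 (v s))
      = Set.range fun i => pauliOp (c i) (a i) (b i) := by
    rw [← Set.Sum.elim_range]
    congr 1
    ext (i | i) : 1 <;> rfl
  have hc : ∀ i, c i ≠ 0 := by rintro (i | i) <;> simp [c, hε]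
  have hba : ∀ i j, b i ⬝ᵥ a j = 0 := by rintro (i | i) (j | j) <;> simp [a, b, hvu]
  have hli : LinearIndependent (ZMod 2) fun i => (a i, b i) := by
    convert linearIndependent_inl_union_inr' hu hv using 1
    ext (i | i) : 1 <;> rfl
  have hinj : Function.Injective fun i => pauliOp (c i) (a i) (b i) := fun i j h => by
    obtain ⟨-, ha, hb⟩ := eq_of_pauliOp_eq (hc i) h
    exact hli.injective (Prod.ext ha hb)
  refine ⟨⟨⟨?_, ?_, neg_one_notMem_closure_union hvu hneg⟩, ?_⟩, ?_⟩
  · rintro A (hA | ⟨s, rfl⟩)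
    · exact hpauli A hA
    · simpa [ZopF_eq_pauliOp] using isPauli_ZopF (v s)
  · rw [hrange]
    rintro _ ⟨i, rfl⟩ _ ⟨j, rfl⟩
    exact pauliOp_mul_comm (by rw [hba, hba])
  · rw [hrange]
    exact (noScalarProducts_range_pauliOp_iff hc hba hinj).mpr hli
  · rw [hrange, Set.ncard_range_of_injective hinj, Nat.card_sum, Nat.card_fin, Nat.card_fin, hMK]

end Stabilizer

open Stabilizer

theorem statement4_general (N M : ℕ)
    (ε : Fin M → ℂ) (hε : ∀ r, ε r = 1 ∨ ε r = -1)
    (u : Fin M → (Fin N → ZMod 2))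
    (hinj : Function.Injective fun r => ε r • XopF (u r))
    (hind : IsIndependentSet (Set.range fun r => ε r • XopF (u r))) :
    ∃ v : Fin (N - M) → (Fin N → ZMod 2),
      IsCompleteSet
        ((Set.range fun r => ε r • XopF (u r)) ∪
          (Set.range fun r => ZopF (v r))) := by
  have hX : (fun r => ε r • XopF (u r)) = fun r => pauliOp (ε r) (u r) 0 :=
    funext fun r => by rw [XopF_eq_pauliOp, smul_pauliOp, mul_one]
  have hε0 : ∀ r, ε r ≠ 0 := fun r => by rcases hε r with h | h <;> simp [h]
  rw [hX] at hinj hind ⊢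
  have hu : LinearIndependent (ZMod 2) u :=
    LinearIndependent.of_comp (LinearMap.inl (ZMod 2) _ (Fin N → ZMod 2))
      ((noScalarProducts_range_pauliOp_iff hε0 (fun _ _ => zero_dotProduct _) hinj).mp hind.2)
  have hMN : M ≤ N := by simpa using hu.fintype_card_le_finrank
  obtain ⟨v, hv, hvu⟩ := exists_linearIndependent_dotProduct_eq_zero u
  refine ⟨v, ?_⟩
  simp only [ZopF_eq_pauliOp]
  exact isCompleteSet_union_range_pauliOp (Nat.add_sub_cancel' hMN) hε0 hu hv hvu hind.1

/-- an independent set of stabilizers consisting of signed products of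
Pauli-`X` operators can be completed by `N - M` products of Pauli-`Z` operators. -/
theorem statement4 (N M : ℕ) (hN : 0 < N)
    (ε : Fin M → ℂ) (hε : ∀ r, ε r = 1 ∨ ε r = -1)
    (u : Fin M → (Fin N → ZMod 2))
    (hinj : Function.Injective fun r => ε r • XopF (u r))
    (hind : IsIndependentSet (Set.range fun r => ε r • XopF (u r))) :
    ∃ v : Fin (N - M) → (Fin N → ZMod 2),
      IsCompleteSet
        ((Set.range fun r => ε r • XopF (u r)) ∪
          (Set.range fun r => ZopF (v r))) :=
  statement4_general N M ε hε u hinj hind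
end
end

section
/- Let ι be a finite type and let U, V be ZMod 2-linear subspaces of the space of functions ι → ZMod 2 such that u·v = 0 for all u ∈ U and v ∈ V. Then the subspace {ψ : X_u ψ = ψ for all u ∈ U, and Z_v ψ = ψ for all v ∈ V} of the ι-qubit Hilbert space has complex dimension 2^{|ι| − dim U − dim V}, where dim denotes the ZMod 2-dimension. -/
/-!
A vector fixed by every `X_u` with `u ∈ U` is a function invariant under translation by `U`; one
fixed by every `Z_v` with `v ∈ V` vanishes at every `s` with `v·s ≠ 0` for some `v ∈ V`, i.e. off
the orthogonal complement `W = V^⊥`. As `U ≤ W`, the joint fixed vectors are exactly the functions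
on `W ⧸ U` extended by zero, so the dimension is `|W ⧸ U| = 2^(dim W - dim U)` with
`dim W = |ι| - dim V`.
-/

noncomputable section

/-- The `ZMod 2`-valued dot product `u·v = ∑ j, u j * v j`. -/
def dotp {ι : Type} [Fintype ι] (u v : ι → ZMod 2) : ZMod 2 := ∑ j, u j * v j

/-- The X-type Pauli operator `X_u`: the permutation matrix with
`(X_u)_{s,t} = 1` iff `s = t + u`. -/
def Xop {ι : Type} [Fintype ι] (u : ι → ZMod 2) :
    Matrix (ι → ZMod 2) (ι → ZMod 2) ℂ :=
  Matrix.of fun s t => if s = t + u then 1 else 0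

/-- The Z-type Pauli operator `Z_v`: the diagonal matrix with
`(Z_v)_{s,s} = (-1)^(v·s)`. -/
def Zop {ι : Type} [Fintype ι] (v : ι → ZMod 2) :
    Matrix (ι → ZMod 2) (ι → ZMod 2) ℂ :=
  Matrix.of fun s t => if s = t then (-1 : ℂ) ^ (dotp v s).val else 0

/-- The standard inner product on the `ι`-qubit Hilbert space `(ι → ZMod 2) → ℂ`. -/
def qInner {ι : Type} [Fintype ι] [DecidableEq ι] (ψ φ : (ι → ZMod 2) → ℂ) : ℂ :=
  ∑ s, (starRingEnd ℂ) (ψ s) * φ s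

/-- The subspace of vectors fixed by every operator in a given set of matrices. -/
def fixedSpace {ι : Type} [Fintype ι] [DecidableEq ι]
    (Ms : Set (Matrix (ι → ZMod 2) (ι → ZMod 2) ℂ)) :
    Submodule ℂ ((ι → ZMod 2) → ℂ) :=
  ⨅ M ∈ Ms, LinearMap.ker (Matrix.mulVecLin M - LinearMap.id)

open Module Matrix Function

section ExtendFromQuotient

variable {R G : Type*} [Ring R] [AddCommGroup G] [Module R G] (U W : Submodule R G)

def extendFromQuotient : (W ⧸ U.comap W.subtype → ℂ) →ₗ[ℂ] G → ℂ :=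
  ExtendByZero.linearMap ℂ W.subtype ∘ₗ LinearMap.funLeft ℂ ℂ (U.comap W.subtype).mkQ

variable {U W}

lemma extendFromQuotient_apply_of_mem (g : W ⧸ U.comap W.subtype → ℂ) (w : W) :
    extendFromQuotient U W g w = g (Submodule.Quotient.mk w) :=
  Subtype.val_injective.extend_apply _ _ w

lemma extendFromQuotient_apply_of_notMem (g : W ⧸ U.comap W.subtype → ℂ) {s : G} (hs : s ∉ W) :
    extendFromQuotient U W g s = 0 :=
  extend_apply' _ _ s fun ⟨w, hw⟩ => hs (hw ▸ w.2)

lemma extendFromQuotient_injective : Injective (extendFromQuotient U W) :=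
  (extend_injective Subtype.val_injective (0 : G → ℂ)).comp
    (LinearMap.funLeft_injective_of_surjective _ _ _ (Submodule.mkQ_surjective _))

lemma mem_range_extendFromQuotient (hUW : U ≤ W) {ψ : G → ℂ} :
    ψ ∈ LinearMap.range (extendFromQuotient U W) ↔
      (∀ u ∈ U, ∀ s, ψ (s + u) = ψ s) ∧ ∀ s ∉ W, ψ s = 0 := by
  constructor
  · rintro ⟨g, rfl⟩
    refine ⟨fun u hu s => ?_, fun s hs => extendFromQuotient_apply_of_notMem g hs⟩
    by_cases hs : s ∈ W
    · have hsu : s + u ∈ W := W.add_mem hs (hUW hu)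
      have hq : (Submodule.Quotient.mk ⟨s + u, hsu⟩ : W ⧸ U.comap W.subtype) =
          Submodule.Quotient.mk ⟨s, hs⟩ := by
        rw [Submodule.Quotient.eq]
        simpa using hu
      rw [extendFromQuotient_apply_of_mem g ⟨s + u, hsu⟩,
        extendFromQuotient_apply_of_mem g ⟨s, hs⟩, hq]
    · have hsu : s + u ∉ W := fun h => hs (by simpa using W.sub_mem h (hUW hu))
      rw [extendFromQuotient_apply_of_notMem g hs, extendFromQuotient_apply_of_notMem g hsu]
  · rintro ⟨hinv, hsupp⟩
    have hmkQ := Submodule.mkQ_surjective (U.comap W.subtype)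
    let rep := surjInv hmkQ
    refine ⟨ψ ∘ (↑) ∘ rep, funext fun s => ?_⟩
    by_cases hs : s ∈ W
    · have hrep : (rep (Submodule.Quotient.mk ⟨s, hs⟩) : G) - s ∈ U := by
        have := surjInv_eq hmkQ (Submodule.Quotient.mk ⟨s, hs⟩)
        simpa using (Submodule.Quotient.eq _).mp this
      rw [extendFromQuotient_apply_of_mem _ ⟨s, hs⟩]
      simpa using hinv _ hrep s
    · rw [extendFromQuotient_apply_of_notMem _ hs, hsupp s hs]

lemma finrank_range_extendFromQuotient [Finite G] :
    finrank ℂ (LinearMap.range (extendFromQuotient U W)) = Nat.card (W ⧸ U.comap W.subtype) := by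
  have : Finite (W ⧸ U.comap W.subtype) := Quotient.finite _
  have : Fintype (W ⧸ U.comap W.subtype) := Fintype.ofFinite _
  rw [LinearMap.finrank_range_of_inj extendFromQuotient_injective,
    finrank_fintype_fun_eq_card, Nat.card_eq_fintype_card]

end ExtendFromQuotient

lemma Submodule.finrank_quotient_comap_subtype {K V : Type*} [Field K] [AddCommGroup V]
    [Module K V] [FiniteDimensional K V] {U W : Submodule K V} (hUW : U ≤ W) :
    finrank K (W ⧸ U.comap W.subtype) = finrank K W - finrank K U := by
  rw [← (U.comap W.subtype).finrank_quotient_add_finrank, (comapSubtypeEquivOfLe hUW).finrank_eq,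
    Nat.add_sub_cancel]

section DotOrthogonal

variable {K ι : Type*} [Field K] [Fintype ι]

lemma dotProductBilin_nondegenerate :
    (dotProductBilin K K : LinearMap.BilinForm K (ι → K)).Nondegenerate :=
  ⟨fun _ h => dotProduct_eq_zero_iff.mp h,
    fun _ h => dotProduct_eq_zero_iff.mp fun w => (dotProduct_comm _ _).trans (h w)⟩

def dotOrthogonal (V : Submodule K (ι → K)) : Submodule K (ι → K) :=
  LinearMap.BilinForm.orthogonal (dotProductBilin K K) V

lemma mem_dotOrthogonal {V : Submodule K (ι → K)} {s : ι → K} :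
    s ∈ dotOrthogonal V ↔ ∀ v ∈ V, v ⬝ᵥ s = 0 :=
  Iff.rfl

lemma finrank_dotOrthogonal (V : Submodule K (ι → K)) :
    finrank K (dotOrthogonal V) = Fintype.card ι - finrank K V := by
  rw [dotOrthogonal, LinearMap.BilinForm.finrank_orthogonal dotProductBilin_nondegenerate,
    finrank_fintype_fun_eq_card]

end DotOrthogonal

section Pauli

variable {ι : Type} [Fintype ι]

lemma Zop_eq_diagonal (v : ι → ZMod 2) :
    Zop v = diagonal fun s => (-1 : ℂ) ^ (dotp v s).val :=
  rfl

lemma neg_one_pow_val_mul_eq_self_iff (a : ZMod 2) (x : ℂ) :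
    (-1 : ℂ) ^ a.val * x = x ↔ (a ≠ 0 → x = 0) := by
  obtain rfl | rfl : a = 0 ∨ a = 1 := by revert a; decide
  · simp
  · simp [ZMod.val_one, neg_eq_self]

variable [DecidableEq ι]

lemma Xop_mulVec_apply (u : ι → ZMod 2) (ψ : (ι → ZMod 2) → ℂ) (s : ι → ZMod 2) :
    (Xop u *ᵥ ψ) s = ψ (s + u) := by
  have hshift : ∀ t, s = t + u ↔ t = s + u := fun t => by
    rw [← ZModModule.sub_eq_add, eq_sub_iff_add_eq, eq_comm]
  simp [mulVec, dotProduct, Xop, hshift]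

lemma Xop_mulVec_eq_self_iff (u : ι → ZMod 2) (ψ : (ι → ZMod 2) → ℂ) :
    Xop u *ᵥ ψ = ψ ↔ ∀ s, ψ (s + u) = ψ s := by
  simp only [funext_iff, Xop_mulVec_apply]

lemma Zop_mulVec_eq_self_iff (v : ι → ZMod 2) (ψ : (ι → ZMod 2) → ℂ) :
    Zop v *ᵥ ψ = ψ ↔ ∀ s, dotp v s ≠ 0 → ψ s = 0 := by
  simp only [funext_iff, Zop_eq_diagonal, mulVec_diagonal, neg_one_pow_val_mul_eq_self_iff]

lemma mem_fixedSpace_iff {Ms : Set (Matrix (ι → ZMod 2) (ι → ZMod 2) ℂ)} {ψ : (ι → ZMod 2) → ℂ} :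
    ψ ∈ fixedSpace Ms ↔ ∀ M ∈ Ms, M *ᵥ ψ = ψ := by
  simp [fixedSpace, sub_eq_zero]

lemma mem_fixedSpace_pauli_iff (U V : Submodule (ZMod 2) (ι → ZMod 2)) (ψ : (ι → ZMod 2) → ℂ) :
    ψ ∈ fixedSpace ({M | ∃ u ∈ U, M = Xop u} ∪ {M | ∃ v ∈ V, M = Zop v}) ↔
      (∀ u ∈ U, ∀ s, ψ (s + u) = ψ s) ∧ ∀ s ∉ dotOrthogonal V, ψ s = 0 := by
  simp only [mem_fixedSpace_iff, Set.mem_union, Set.mem_ofPred_eq, or_imp, forall_and,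
    forall_exists_index, and_imp]
  refine and_congr ⟨fun h u hu => ?_, fun h M u hu hM => ?_⟩
    ⟨fun h s hs => ?_, fun h M v hv hM => ?_⟩
  · exact (Xop_mulVec_eq_self_iff u ψ).mp (h _ u hu rfl)
  · exact hM ▸ (Xop_mulVec_eq_self_iff u ψ).mpr (h u hu)
  · obtain ⟨v, hv, hvs⟩ : ∃ v ∈ V, v ⬝ᵥ s ≠ 0 := by simpa [mem_dotOrthogonal] using hs
    exact (Zop_mulVec_eq_self_iff v ψ).mp (h _ v hv rfl) s hvs
  · refine hM ▸ (Zop_mulVec_eq_self_iff v ψ).mpr fun s hvs => h s fun hs => hvs ?_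
    exact mem_dotOrthogonal.mp hs v hv

end Pauli

/-- for orthogonal `ZMod 2`-subspaces `U, V` of `ι → ZMod 2`, the joint
`+1` eigenspace of all `X_u` (`u ∈ U`) and `Z_v` (`v ∈ V`) has complex dimension
`2^(|ι| - dim U - dim V)`. -/
theorem statement9 (ι : Type) [Fintype ι] [DecidableEq ι]
    (U V : Submodule (ZMod 2) (ι → ZMod 2))
    (hUV : ∀ u ∈ U, ∀ v ∈ V, dotp u v = 0) :
    Module.finrank ℂ
      ↥(fixedSpace ({M | ∃ u ∈ U, M = Xop u} ∪ {M | ∃ v ∈ V, M = Zop v})) =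
      2 ^ (Fintype.card ι - Module.finrank (ZMod 2) U - Module.finrank (ZMod 2) V) := by
  have hUW : U ≤ dotOrthogonal V := fun u hu =>
    mem_dotOrthogonal.mpr fun v hv => (dotProduct_comm v u).trans (hUV u hu v hv)
  have hfixed : fixedSpace ({M | ∃ u ∈ U, M = Xop u} ∪ {M | ∃ v ∈ V, M = Zop v}) =
      LinearMap.range (extendFromQuotient U (dotOrthogonal V)) := by
    ext ψ
    rw [mem_fixedSpace_pauli_iff, mem_range_extendFromQuotient hUW]
  rw [hfixed, finrank_range_extendFromQuotient, Module.natCard_eq_pow_finrank (K := ZMod 2),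
    Nat.card_zmod, Submodule.finrank_quotient_comap_subtype hUW, finrank_dotOrthogonal,
    Nat.sub_right_comm]
end
end

section
/- Let (ι, A, I, z, x) be a GI datum, (ι', A, I, z', x') a Kramers–Wannier dual datum for it, and m ≥ 2 an integer. Then any two operators in the periodic bulk stabilizer set commute; in particular the duality relation (z α)·(x i) = (z' α)·(x' i) implies that every Z-suspension operator commutes with every X-suspension operator. -/
noncomputable section

/-- The periodic bulk qubit type: `m` odd layers (copies of `ι`) and `m` even layers
(copies of `ι'`), cyclically arranged (odd layer `l` between even layers `l` and `l+1`). -/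
abbrev BulkQ (m : ℕ) (ι ι' : Type) : Type := (ZMod m × ι) ⊕ (ZMod m × ι')

/-- `w@o_l`: the vector equal to `w` on odd layer `l` and `0` elsewhere. -/
def atOdd {m : ℕ} {ι ι' : Type} (l : ZMod m) (w : ι → ZMod 2) : BulkQ m ι ι' → ZMod 2
  | Sum.inl p => if p.1 = l then w p.2 else 0
  | Sum.inr _ => 0

/-- `w'@e_l`: the vector equal to `w'` on even layer `l` and `0` elsewhere. -/
def atEven {m : ℕ} {ι ι' : Type} (l : ZMod m) (w' : ι' → ZMod 2) : BulkQ m ι ι' → ZMod 2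
  | Sum.inl _ => 0
  | Sum.inr p => if p.1 = l then w' p.2 else 0

/-- The periodic bulk stabilizer set: Z-suspension operators, X-suspension operators,
and the layer-wise local/compatible symmetry operators of the GI datum and its dual. -/
def periodicBulkSet (m : ℕ) [NeZero m] (ι ι' A I : Type)
    [Fintype ι] [DecidableEq ι] [Fintype ι'] [DecidableEq ι'] [Fintype A] [Fintype I]
    (z : A → ι → ZMod 2) (x : I → ι → ZMod 2)
    (z' : A → ι' → ZMod 2) (x' : I → ι' → ZMod 2) :
    Set (Matrix (BulkQ m ι ι' → ZMod 2) (BulkQ m ι ι' → ZMod 2) ℂ) :=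
  {M | (∃ (α : A) (l : ZMod m),
          M = Zop (atEven l (z' α) + atOdd l (z α) + atEven (l + 1) (z' α))) ∨
       (∃ (i : I) (l : ZMod m),
          M = Xop (atOdd (l - 1) (x i) + atEven l (x' i) + atOdd l (x i))) ∨
       (∃ (l : ZMod m) (v : ι → ZMod 2),
          (∀ i, dotp v (x i) = 0) ∧ M = Zop (atOdd l v)) ∨
       (∃ (l : ZMod m) (u : ι → ZMod 2),
          (∀ α, dotp u (z α) = 0) ∧
          (∀ v : ι → ZMod 2, (∀ i, dotp v (x i) = 0) → dotp u v = 0) ∧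
          M = Xop (atOdd l u)) ∨
       (∃ (l : ZMod m) (u' : ι' → ZMod 2),
          (∀ α, dotp u' (z' α) = 0) ∧ M = Xop (atEven l u')) ∨
       (∃ (l : ZMod m) (v' : ι' → ZMod 2),
          v' ∈ Submodule.span (ZMod 2) (Set.range z') ∧
          (∀ i, dotp v' (x' i) = 0) ∧ M = Zop (atEven l v'))}

/-!
Every operator in the set is either a Z-type Pauli `Z_v` or an X-type Pauli `X_u`. Two Z-type
or two X-type operators always commute, and `X_u` commutes with `Z_v` as soon as `v·u = 0`.
So it suffices to check that each Z-vector of the bulk is orthogonal to each X-vector. The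
layered vectors only pair within a common layer, and a Z-suspension at `l` meets an
X-suspension at `k` in two layers exactly when `k = l` or `k = l + 1`, each time contributing
`(z α)·(x i) + (z' α)·(x' i)`, which vanishes in characteristic two by the duality relation.
-/

section Pauli

variable {ι : Type} [Fintype ι]

lemma dotp_comm (u v : ι → ZMod 2) : dotp u v = dotp v u := by
  simp [dotp, mul_comm]

lemma dotp_add_left (u v w : ι → ZMod 2) : dotp (u + v) w = dotp u w + dotp v w := by
  simp [dotp, add_mul, Finset.sum_add_distrib]

lemma dotp_add_right (u v w : ι → ZMod 2) : dotp u (v + w) = dotp u v + dotp u w := by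
  simp [dotp, mul_add, Finset.sum_add_distrib]

lemma dotp_smul_left (c : ZMod 2) (u v : ι → ZMod 2) : dotp (c • u) v = c * dotp u v := by
  simp [dotp, Finset.mul_sum, mul_assoc]

lemma dotp_eq_zero_of_mem_span {S : Set (ι → ZMod 2)} {u v : ι → ZMod 2}
    (h : ∀ w ∈ S, dotp w u = 0) (hv : v ∈ Submodule.span (ZMod 2) S) : dotp v u = 0 := by
  induction hv using Submodule.span_induction with
  | mem w hw => exact h w hw
  | zero => simp [dotp]
  | add a b _ _ ha hb => rw [dotp_add_left, ha, hb, add_zero]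
  | smul c a _ ha => rw [dotp_smul_left, ha, mul_zero]

variable [DecidableEq ι]

lemma Zop_commute (v w : ι → ZMod 2) : Commute (Zop v) (Zop w) := by
  ext s t
  rw [Matrix.mul_apply, Matrix.mul_apply, Finset.sum_eq_single s, Finset.sum_eq_single s]
  · by_cases h : s = t
    · subst h; simp [Zop, mul_comm]
    · simp [Zop, h]
  · intro k _ hk; simp [Zop, Ne.symm hk]
  · simp
  · intro k _ hk; simp [Zop, Ne.symm hk]
  · simp

lemma Xop_mul_Xop (u w : ι → ZMod 2) : Xop u * Xop w = Xop (w + u) := by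
  ext s t
  rw [Matrix.mul_apply, Finset.sum_eq_single (t + w)]
  · simp [Xop, add_assoc]
  · intro k _ hk; simp [Xop, hk]
  · simp

lemma Xop_commute (u w : ι → ZMod 2) : Commute (Xop u) (Xop w) := by
  rw [Commute, SemiconjBy, Xop_mul_Xop, Xop_mul_Xop, add_comm]

lemma Xop_commute_Zop {u v : ι → ZMod 2} (h : dotp v u = 0) : Commute (Xop u) (Zop v) := by
  ext s t
  rw [Matrix.mul_apply, Matrix.mul_apply, Finset.sum_eq_single t, Finset.sum_eq_single s]
  · by_cases hst : s = t + u
    · subst hst; simp [Zop, Xop, dotp_add_right, h]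
    · simp [Zop, Xop, hst]
  · intro k _ hk; simp [Zop, Ne.symm hk]
  · simp
  · intro k _ hk; simp [Zop, hk]
  · simp

lemma commute_of_subset_Zop_Xop {V U : Set (ι → ZMod 2)}
    (hVU : ∀ v ∈ V, ∀ u ∈ U, dotp v u = 0) {S : Set (Matrix (ι → ZMod 2) (ι → ZMod 2) ℂ)}
    (hS : S ⊆ Zop '' V ∪ Xop '' U) : ∀ M ∈ S, ∀ N ∈ S, Commute M N := by
  intro M hM N hN
  obtain ⟨v, hv, rfl⟩ | ⟨u, hu, rfl⟩ := hS hM <;>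
    obtain ⟨w, hw, rfl⟩ | ⟨t, ht, rfl⟩ := hS hN
  · exact Zop_commute v w
  · exact (Xop_commute_Zop (hVU v hv t ht)).symm
  · exact Xop_commute_Zop (hVU w hw u hu)
  · exact Xop_commute u t

end Pauli

section Bulk

variable {m : ℕ} [NeZero m] {ι ι' : Type} [Fintype ι] [Fintype ι']

lemma dotp_atOdd_atOdd (l k : ZMod m) (a b : ι → ZMod 2) :
    dotp (atOdd l a : BulkQ m ι ι' → ZMod 2) (atOdd k b) = if l = k then dotp a b else 0 := by
  simp only [dotp, Fintype.sum_sum_type, atOdd, mul_zero, Finset.sum_const_zero,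
    add_zero, Fintype.sum_prod_type, ite_mul, zero_mul, mul_ite]
  rw [Finset.sum_eq_single l]
  · by_cases h : l = k <;> simp [h]
  · intro j _ hj; simp [hj]
  · simp

lemma dotp_atEven_atEven (l k : ZMod m) (a' b' : ι' → ZMod 2) :
    dotp (atEven l a' : BulkQ m ι ι' → ZMod 2) (atEven k b') =
      if l = k then dotp a' b' else 0 := by
  simp only [dotp, Fintype.sum_sum_type, atEven, mul_zero, zero_mul,
    Finset.sum_const_zero, zero_add, Fintype.sum_prod_type, ite_mul, mul_ite]
  rw [Finset.sum_eq_single l]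
  · by_cases h : l = k <;> simp [h]
  · intro j _ hj; simp [hj]
  · simp

lemma dotp_atOdd_atEven (l k : ZMod m) (a : ι → ZMod 2) (b' : ι' → ZMod 2) :
    dotp (atOdd l a : BulkQ m ι ι' → ZMod 2) (atEven k b') = 0 := by
  simp [dotp, Fintype.sum_sum_type, atOdd, atEven]

lemma dotp_atEven_atOdd (l k : ZMod m) (a' : ι' → ZMod 2) (b : ι → ZMod 2) :
    dotp (atEven l a' : BulkQ m ι ι' → ZMod 2) (atOdd k b) = 0 := by
  simp [dotp, Fintype.sum_sum_type, atOdd, atEven]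

lemma dotp_suspension_eq_zero (l k : ZMod m) {a b : ι → ZMod 2} {a' b' : ι' → ZMod 2}
    (h : dotp a b = dotp a' b') :
    dotp (atEven l a' + atOdd l a + atEven (l + 1) a' : BulkQ m ι ι' → ZMod 2)
      (atOdd (k - 1) b + atEven k b' + atOdd k b) = 0 := by
  simp only [dotp_add_left, dotp_add_right, dotp_atOdd_atOdd, dotp_atEven_atEven,
    dotp_atOdd_atEven, dotp_atEven_atOdd, zero_add, add_zero, h, eq_sub_iff_add_eq]
  generalize dotp a' b' = c
  split_ifs <;> revert c <;> decide

variable (m ι ι') {A I : Type} (z : A → ι → ZMod 2) (x : I → ι → ZMod 2)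
  (z' : A → ι' → ZMod 2) (x' : I → ι' → ZMod 2)

def bulkZVectors : Set (BulkQ m ι ι' → ZMod 2) :=
  {w | (∃ (α : A) (l : ZMod m), w = atEven l (z' α) + atOdd l (z α) + atEven (l + 1) (z' α)) ∨
       (∃ (l : ZMod m) (v : ι → ZMod 2), (∀ i, dotp v (x i) = 0) ∧ w = atOdd l v) ∨
       (∃ (l : ZMod m) (v' : ι' → ZMod 2), v' ∈ Submodule.span (ZMod 2) (Set.range z') ∧
          (∀ i, dotp v' (x' i) = 0) ∧ w = atEven l v')}

def bulkXVectors : Set (BulkQ m ι ι' → ZMod 2) :=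
  {w | (∃ (i : I) (l : ZMod m), w = atOdd (l - 1) (x i) + atEven l (x' i) + atOdd l (x i)) ∨
       (∃ (l : ZMod m) (u : ι → ZMod 2), (∀ α, dotp u (z α) = 0) ∧
          (∀ v : ι → ZMod 2, (∀ i, dotp v (x i) = 0) → dotp u v = 0) ∧ w = atOdd l u) ∨
       (∃ (l : ZMod m) (u' : ι' → ZMod 2), (∀ α, dotp u' (z' α) = 0) ∧ w = atEven l u')}

lemma dotp_eq_zero_of_mem_bulkZVectors_of_mem_bulkXVectors
    (hdual : ∀ α i, dotp (z α) (x i) = dotp (z' α) (x' i)) :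
    ∀ v ∈ bulkZVectors m ι ι' z x z' x', ∀ u ∈ bulkXVectors m ι ι' z x z' x', dotp v u = 0 := by
  rintro _ (⟨α, l, rfl⟩ | ⟨l, v, hv, rfl⟩ | ⟨l, v', hspan, hv', rfl⟩)
    _ (⟨i, k, rfl⟩ | ⟨k, u, hu, hperp, rfl⟩ | ⟨k, u', hu', rfl⟩)
  · exact dotp_suspension_eq_zero l k (hdual α i)
  · simp [dotp_add_left, dotp_atOdd_atOdd, dotp_atEven_atOdd, dotp_comm _ u, hu α]
  · simp [dotp_add_left, dotp_atEven_atEven, dotp_atOdd_atEven, dotp_comm _ u', hu' α]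
  · simp [dotp_add_right, dotp_atOdd_atOdd, dotp_atOdd_atEven, hv i]
  · simp [dotp_atOdd_atOdd, dotp_comm v u, hperp v hv]
  · exact dotp_atOdd_atEven l k v u'
  · simp [dotp_add_right, dotp_atEven_atEven, dotp_atEven_atOdd, hv' i]
  · exact dotp_atEven_atOdd l k v' u
  · have hv'u' : dotp v' u' = 0 :=
      dotp_eq_zero_of_mem_span (by rintro _ ⟨α, rfl⟩; rw [dotp_comm]; exact hu' α) hspan
    simp [dotp_atEven_atEven, hv'u']

lemma periodicBulkSet_subset [DecidableEq ι] [DecidableEq ι'] [Fintype A] [Fintype I] :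
    periodicBulkSet m ι ι' A I z x z' x' ⊆
      Zop '' bulkZVectors m ι ι' z x z' x' ∪ Xop '' bulkXVectors m ι ι' z x z' x' := by
  rintro _ (⟨α, l, rfl⟩ | ⟨i, l, rfl⟩ | ⟨l, v, hv, rfl⟩ | ⟨l, u, hu, hperp, rfl⟩ |
    ⟨l, u', hu', rfl⟩ | ⟨l, v', hspan, hv', rfl⟩)
  · exact Or.inl ⟨_, Or.inl ⟨α, l, rfl⟩, rfl⟩
  · exact Or.inr ⟨_, Or.inl ⟨i, l, rfl⟩, rfl⟩
  · exact Or.inl ⟨_, Or.inr (Or.inl ⟨l, v, hv, rfl⟩), rfl⟩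
  · exact Or.inr ⟨_, Or.inr (Or.inl ⟨l, u, hu, hperp, rfl⟩), rfl⟩
  · exact Or.inr ⟨_, Or.inr (Or.inr ⟨l, u', hu', rfl⟩), rfl⟩
  · exact Or.inl ⟨_, Or.inr (Or.inr ⟨l, v', hspan, hv', rfl⟩), rfl⟩

end Bulk

theorem statement12_general (m : ℕ) [NeZero m] (ι ι' A I : Type)
    [Fintype ι] [DecidableEq ι] [Fintype ι'] [DecidableEq ι'] [Fintype A] [Fintype I]
    (z : A → ι → ZMod 2) (x : I → ι → ZMod 2)
    (z' : A → ι' → ZMod 2) (x' : I → ι' → ZMod 2)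
    (hdual : ∀ (α : A) (i : I), dotp (z α) (x i) = dotp (z' α) (x' i)) :
    ∀ M ∈ periodicBulkSet m ι ι' A I z x z' x',
      ∀ M' ∈ periodicBulkSet m ι ι' A I z x z' x', M * M' = M' * M :=
  commute_of_subset_Zop_Xop
    (dotp_eq_zero_of_mem_bulkZVectors_of_mem_bulkXVectors m ι ι' z x z' x' hdual)
    (periodicBulkSet_subset m ι ι' z x z' x')

/-- all operators in the periodic bulk stabilizer set pairwise commute. -/
theorem statement12 (m : ℕ) [NeZero m] (hm : 2 ≤ m) (ι ι' A I : Type)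
    [Fintype ι] [DecidableEq ι] [Fintype ι'] [DecidableEq ι'] [Fintype A] [Fintype I]
    (z : A → ι → ZMod 2) (x : I → ι → ZMod 2)
    (z' : A → ι' → ZMod 2) (x' : I → ι' → ZMod 2)
    (hdual : ∀ (α : A) (i : I), dotp (z α) (x i) = dotp (z' α) (x' i)) :
    ∀ M ∈ periodicBulkSet m ι ι' A I z x z' x',
      ∀ M' ∈ periodicBulkSet m ι ι' A I z x z' x', M * M' = M' * M :=
  statement12_general m ι ι' A I z x z' x' hdual
end
end
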